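/- arXiv:1901.11450 — 5 statements merged into one kernel-verified Lean document; each statement's English description precedes it below -/
import Mathlib

section
/- (q-Lucas theorem) Let F be a field and q ∈ F a primitive ℓ-th root of unity with ℓ > 1. Write r = r₀ + r₁ℓ and s = s₀ + s₁ℓ with 0 ≤ r₀, s₀ ≤ ℓ−1. Then the Gaussian binomial coefficient satisfies [r choose s]_q = [r₀ choose s₀]_q · C(r₁, s₁), where C(r₁,s₁) is the ordinary binomial coefficient (interpreted in F). -/
/-!
Eliminating `[n choose k+1]_q` between the two q-Pascal rules gives
`(1 - q^(k+1)) [n+1 choose k+1]_q = (1 - q^(n+1)) [n choose k]_q`, so at a primitive `ℓ`-th root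
of unity `[ℓ choose k]_q = 0` for `0 < k < ℓ`. Feeding this into the q-Pascal rule, adding `ℓ` to
the top row acts like the ordinary Pascal rule on blocks of length `ℓ`:
`[n+ℓ choose k]_q = [n choose k]_q` for `k < ℓ` and
`[n+ℓ choose k+ℓ]_q = [n choose k+ℓ]_q + [n choose k]_q`.
Induction on `r₁` then reproduces the Pascal recursion of `C(r₁, s₁)`.
-/

/-- The Gaussian (q-)binomial coefficient, defined by the q-Pascal recursion
`[n+1 choose k+1]_q = q^(k+1) [n choose k+1]_q + [n choose k]_q`. -/
def qbinom {F : Type*} [Field F] (q : F) : ℕ → ℕ → F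
  | _, 0 => 1
  | 0, _ + 1 => 0
  | n + 1, k + 1 => q ^ (k + 1) * qbinom q n (k + 1) + qbinom q n k

section QBinom

variable {F : Type*} [Field F] (q : F)

@[simp]
theorem qbinom_zero_right (n : ℕ) : qbinom q n 0 = 1 := by
  cases n <;> rfl

@[simp]
theorem qbinom_zero_succ (k : ℕ) : qbinom q 0 (k + 1) = 0 := rfl

theorem qbinom_succ_succ (n k : ℕ) :
    qbinom q (n + 1) (k + 1) = q ^ (k + 1) * qbinom q n (k + 1) + qbinom q n k := rfl

theorem qbinom_eq_zero_of_lt : ∀ {n k : ℕ}, n < k → qbinom q n k = 0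
  | 0, _ + 1, _ => rfl
  | n + 1, k + 1, h => by
    rw [qbinom_succ_succ, qbinom_eq_zero_of_lt (by omega), qbinom_eq_zero_of_lt (by omega)]
    ring

@[simp]
theorem qbinom_self : ∀ n : ℕ, qbinom q n n = 1
  | 0 => rfl
  | n + 1 => by
    rw [qbinom_succ_succ, qbinom_eq_zero_of_lt q (Nat.lt_succ_self n), qbinom_self n]
    ring

/-- For `n < k` the truncated exponent `n - k` is harmless: both coefficients on the right
vanish. -/
theorem qbinom_succ_succ' : ∀ n k : ℕ,
    qbinom q (n + 1) (k + 1) = qbinom q n (k + 1) + q ^ (n - k) * qbinom q n k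
  | 0, 0 => by simp
  | 0, k + 1 => by simp [qbinom_eq_zero_of_lt q (show 1 < k + 2 by omega)]
  | n + 1, 0 => by
    have h := qbinom_succ_succ q n 0
    have h' := qbinom_succ_succ' n 0
    rw [qbinom_succ_succ q (n + 1)]
    simp only [qbinom_zero_right, Nat.sub_zero, zero_add, mul_one] at h h' ⊢
    linear_combination q * h' - h
  | n + 1, k + 1 => by
    have hpow : q ^ (k + 2) * q ^ (n - (k + 1)) * qbinom q n (k + 1) =
        q ^ (n - k) * q ^ (k + 1) * qbinom q n (k + 1) := by
      rcases le_or_gt (k + 1) n with hkn | hnk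
      · rw [← pow_add, ← pow_add, show k + 2 + (n - (k + 1)) = n - k + (k + 1) by omega]
      · rw [qbinom_eq_zero_of_lt q hnk, mul_zero, mul_zero]
    rw [qbinom_succ_succ q (n + 1), Nat.add_sub_add_right]
    linear_combination q ^ (k + 2) * qbinom_succ_succ' n (k + 1) + qbinom_succ_succ' n k -
      qbinom_succ_succ q n (k + 1) - q ^ (n - k) * qbinom_succ_succ q n k + hpow

theorem one_sub_pow_mul_qbinom_succ_succ {n k : ℕ} (hkn : k ≤ n) :
    (1 - q ^ (k + 1)) * qbinom q (n + 1) (k + 1) = (1 - q ^ (n + 1)) * qbinom q n k := by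
  have hpow : q ^ (k + 1) * q ^ (n - k) = q ^ (n + 1) := by
    rw [← pow_add, show k + 1 + (n - k) = n + 1 by omega]
  linear_combination qbinom_succ_succ q n k - q ^ (k + 1) * qbinom_succ_succ' q n k -
    qbinom q n k * hpow

end QBinom

namespace IsPrimitiveRoot

variable {F : Type*} [Field F] {q : F} {ℓ : ℕ}

theorem qbinom_eq_zero (hq : IsPrimitiveRoot q ℓ) {k : ℕ} (hk₀ : 0 < k) (hkℓ : k < ℓ) :
    qbinom q ℓ k = 0 := by
  obtain ⟨j, rfl⟩ : ∃ j, k = j + 1 := ⟨k - 1, by omega⟩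
  obtain ⟨m, rfl⟩ : ∃ m, ℓ = m + 1 := ⟨ℓ - 1, by omega⟩
  have hne : 1 - q ^ (j + 1) ≠ 0 :=
    sub_ne_zero.mpr (hq.pow_ne_one_of_pos_of_lt hk₀.ne' hkℓ).symm
  have h := one_sub_pow_mul_qbinom_succ_succ q (show j ≤ m by omega)
  rw [hq.pow_eq_one, sub_self, zero_mul] at h
  exact (mul_eq_zero.mp h).resolve_left hne

theorem qbinom_add_of_lt (hq : IsPrimitiveRoot q ℓ) (n : ℕ) {k : ℕ} (hkℓ : k < ℓ) :
    qbinom q (n + ℓ) k = qbinom q n k := by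
  induction n generalizing k with
  | zero =>
    rcases Nat.eq_zero_or_pos k with rfl | hk₀
    · simp
    · rw [zero_add, hq.qbinom_eq_zero hk₀ hkℓ, qbinom_eq_zero_of_lt q hk₀]
  | succ n ih =>
    cases k with
    | zero => simp
    | succ j =>
      rw [Nat.add_right_comm, qbinom_succ_succ, qbinom_succ_succ, ih hkℓ, ih (by omega)]

theorem qbinom_add_add (hq : IsPrimitiveRoot q ℓ) (hℓ : 0 < ℓ) (n k : ℕ) :
    qbinom q (n + ℓ) (k + ℓ) = qbinom q n (k + ℓ) + qbinom q n k := by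
  induction n generalizing k with
  | zero =>
    rcases Nat.eq_zero_or_pos k with rfl | hk₀
    · rw [zero_add, qbinom_self, qbinom_eq_zero_of_lt q hℓ, qbinom_zero_right, zero_add]
    · rw [zero_add, qbinom_eq_zero_of_lt q (by omega), qbinom_eq_zero_of_lt q (by omega),
        qbinom_eq_zero_of_lt q hk₀, add_zero]
  | succ n ih =>
    cases k with
    | zero =>
      obtain ⟨m, rfl⟩ : ∃ m, ℓ = m + 1 := ⟨ℓ - 1, by omega⟩
      have ih₀ := ih 0
      rw [zero_add] at ih₀ ⊢
      rw [Nat.add_right_comm n 1, qbinom_succ_succ, hq.pow_eq_one, one_mul,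
        hq.qbinom_add_of_lt n (Nat.lt_succ_self m), ih₀, qbinom_succ_succ q n m]
      simp only [qbinom_zero_right, hq.pow_eq_one, one_mul]
      ring
    | succ j =>
      have hperiod : q ^ (j + ℓ + 1) = q ^ (j + 1) := by
        rw [Nat.add_right_comm, pow_add, hq.pow_eq_one, mul_one]
      have ih₁ := ih (j + 1)
      rw [Nat.add_right_comm j 1] at ih₁ ⊢
      rw [Nat.add_right_comm n 1, qbinom_succ_succ, qbinom_succ_succ q n (j + ℓ),
        qbinom_succ_succ q n j]
      linear_combination q ^ (j + ℓ + 1) * ih₁ + ih j + qbinom q n (j + 1) * hperiod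

end IsPrimitiveRoot

/-- The q-Lucas theorem: at a primitive ℓ-th root of unity,
`[r₀ + r₁ℓ choose s₀ + s₁ℓ]_q = [r₀ choose s₀]_q * C(r₁, s₁)`. -/
theorem q_lucas {F : Type*} [Field F] (q : F) (ℓ : ℕ) (hq : IsPrimitiveRoot q ℓ)
    (hℓ : 1 < ℓ) (r₀ r₁ s₀ s₁ : ℕ) (hr₀ : r₀ ≤ ℓ - 1) (hs₀ : s₀ ≤ ℓ - 1) :
    qbinom q (r₀ + r₁ * ℓ) (s₀ + s₁ * ℓ) = qbinom q r₀ s₀ * (Nat.choose r₁ s₁ : F) := by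
  have hr₀ℓ : r₀ < ℓ := by omega
  have hs₀ℓ : s₀ < ℓ := by omega
  induction r₁ generalizing s₁ with
  | zero =>
    cases s₁ with
    | zero => simp
    | succ t =>
      rw [qbinom_eq_zero_of_lt q (by nlinarith), Nat.choose_zero_succ, Nat.cast_zero, mul_zero]
  | succ r₁ ih =>
    rw [add_one_mul, ← add_assoc]
    cases s₁ with
    | zero =>
      have ih₀ := ih 0
      simp only [zero_mul, add_zero, Nat.choose_zero_right] at ih₀ ⊢
      rw [hq.qbinom_add_of_lt _ hs₀ℓ, ih₀]
    | succ t =>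
      rw [add_one_mul, ← add_assoc, hq.qbinom_add_add (by omega), add_assoc, ← add_one_mul,
        ih, ih, Nat.choose_succ_succ', Nat.cast_add]
      ring
end

section
/- Let F be a field, q ∈ F a primitive ℓ-th root of unity with ℓ ≥ 1, and let A_q = F⟨x,y⟩/(xy − qyx) be the quantum plane. Then the center of A_q is the subalgebra generated by x^ℓ and y^ℓ; in particular x^ℓ and y^ℓ are central, they commute, and the center is isomorphic to a polynomial ring in two variables. -/
/-- The defining relation `x y = q • (y x)` of the quantum plane. -/
inductive QPlaneRel (F : Type) [Field F] (q : F) :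
    FreeAlgebra F (Fin 2) → FreeAlgebra F (Fin 2) → Prop
  | rel : QPlaneRel F q (FreeAlgebra.ι F 0 * FreeAlgebra.ι F 1)
      (q • (FreeAlgebra.ι F 1 * FreeAlgebra.ι F 0))

/-!
The monomials `x^a y^b` form an `F`-basis of `A_q`. They span because `y x = q⁻¹ x y`; they are
linearly independent because in the representation of `A_q` on `F[ℕ × ℕ]` given by
`x e_(a,b) = q^b e_(a+1,b)` and `y e_(a,b) = e_(a,b+1)`, the monomial `x^a y^b` sends `e_(0,0)` to
`q^(ab) e_(a,b)`. Left and right multiplication by `x` (resp. `y`) both shift coordinates by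
`(1,0)` (resp. `(0,1)`), with scalars differing by `q^(-b)` (resp. `q^(-a)`), so a central element
is supported on the monomials with `q^a = q^b = 1`, that is `ℓ ∣ a` and `ℓ ∣ b`. These are the
monomials `(x^ℓ)^i (y^ℓ)^j`, and being distinct basis vectors they make `x^ℓ, y^ℓ` algebraically
independent.
-/

section QCommute

variable {R A : Type*} [CommSemiring R] [Semiring A] [Algebra R A] {a b : A} {c : R}

theorem pow_mul_eq_smul_mul_pow (h : a * b = c • (b * a)) (n : ℕ) :
    a ^ n * b = c ^ n • (b * a ^ n) := by
  induction n with
  | zero => simp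
  | succ n ih =>
    calc a ^ (n + 1) * b = a ^ n * (a * b) := by rw [pow_succ, mul_assoc]
      _ = c • ((a ^ n * b) * a) := by rw [h, mul_smul_comm, mul_assoc]
      _ = c ^ (n + 1) • (b * a ^ (n + 1)) := by
        rw [ih, smul_mul_assoc, smul_smul, mul_assoc, ← pow_succ, ← pow_succ']

theorem mul_pow_eq_smul_pow_mul (h : a * b = c • (b * a)) (n : ℕ) :
    a * b ^ n = c ^ n • (b ^ n * a) := by
  induction n with
  | zero => simp
  | succ n ih =>
    calc a * b ^ (n + 1) = (a * b ^ n) * b := by rw [pow_succ, mul_assoc]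
      _ = c ^ n • (b ^ n * (a * b)) := by rw [ih, smul_mul_assoc, mul_assoc]
      _ = c ^ (n + 1) • (b ^ (n + 1) * a) := by
        rw [h, mul_smul_comm, smul_smul, ← mul_assoc, ← pow_succ, ← pow_succ]

end QCommute

theorem Module.Basis.repr_map_apply_of_map_eq_smul {ι κ R M N : Type*} [CommSemiring R]
    [AddCommMonoid M] [Module R M] [AddCommMonoid N] [Module R N]
    (b : Module.Basis ι R M) (b' : Module.Basis κ R N) {f : M →ₗ[R] N} {σ : ι → κ}
    (hσ : σ.Injective) {φ : ι → R} (h : ∀ i, f (b i) = φ i • b' (σ i)) (u : M) (i : ι) :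
    b'.repr (f u) (σ i) = φ i * b.repr u i := by
  have key : Finsupp.lapply (σ i) ∘ₗ b'.repr.toLinearMap ∘ₗ f
      = φ i • (Finsupp.lapply i ∘ₗ b.repr.toLinearMap) := by
    refine b.ext fun j => ?_
    by_cases hji : j = i
    · subst hji; simp [h]
    · simp [h, hσ.eq_iff, hji]
  exact LinearMap.congr_fun key u

noncomputable section

abbrev QuantumPlane {F : Type} [Field F] (q : F) := RingQuot (QPlaneRel F q)

namespace QuantumPlane

variable {F : Type} [Field F] {q : F}

variable (q) in
def x : QuantumPlane q := RingQuot.mkAlgHom F (QPlaneRel F q) (FreeAlgebra.ι F 0)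

variable (q) in
def y : QuantumPlane q := RingQuot.mkAlgHom F (QPlaneRel F q) (FreeAlgebra.ι F 1)

variable (q) in
def monomial (m : ℕ × ℕ) : QuantumPlane q := x q ^ m.1 * y q ^ m.2

theorem x_mul_y : x q * y q = q • (y q * x q) := by
  simpa [x, y] using RingQuot.mkAlgHom_rel F (QPlaneRel.rel (F := F) (q := q))

theorem adjoin_x_y : Algebra.adjoin F {x q, y q} = ⊤ := by
  have hrange :
      Set.range (RingQuot.mkAlgHom F (QPlaneRel F q) ∘ FreeAlgebra.ι F) = {x q, y q} := by
    ext
    simp [Fin.exists_fin_two, x, y, eq_comm]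
  rw [← hrange, Set.range_comp, Algebra.adjoin_image, FreeAlgebra.adjoin_range_ι,
    Algebra.map_top, AlgHom.range_eq_top]
  exact RingQuot.mkAlgHom_surjective F _

theorem x_pow_mul_y (n : ℕ) : x q ^ n * y q = q ^ n • (y q * x q ^ n) :=
  pow_mul_eq_smul_mul_pow x_mul_y n

theorem x_mul_y_pow (n : ℕ) : x q * y q ^ n = q ^ n • (y q ^ n * x q) :=
  mul_pow_eq_smul_pow_mul x_mul_y n

theorem x_mul_monomial (m : ℕ × ℕ) : x q * monomial q m = monomial q (m + (1, 0)) := by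
  rw [monomial, monomial, ← mul_assoc, ← pow_succ']
  rfl

theorem monomial_mul_y (m : ℕ × ℕ) : monomial q m * y q = monomial q (m + (0, 1)) := by
  rw [monomial, monomial, mul_assoc, ← pow_succ]
  rfl

theorem monomial_mul_x (hq : q ≠ 0) (m : ℕ × ℕ) :
    monomial q m * x q = (q ^ m.2)⁻¹ • monomial q (m + (1, 0)) := by
  have hyx : y q ^ m.2 * x q = (q ^ m.2)⁻¹ • (x q * y q ^ m.2) := by
    rw [x_mul_y_pow, inv_smul_smul₀ (pow_ne_zero _ hq)]
  rw [monomial, mul_assoc, hyx, mul_smul_comm, ← mul_assoc, ← pow_succ, monomial]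
  rfl

theorem y_mul_monomial (hq : q ≠ 0) (m : ℕ × ℕ) :
    y q * monomial q m = (q ^ m.1)⁻¹ • monomial q (m + (0, 1)) := by
  have hyx : y q * x q ^ m.1 = (q ^ m.1)⁻¹ • (x q ^ m.1 * y q) := by
    rw [x_pow_mul_y, inv_smul_smul₀ (pow_ne_zero _ hq)]
  rw [monomial, ← mul_assoc, hyx, smul_mul_assoc, mul_assoc, ← pow_succ', monomial]
  rfl

theorem span_range_monomial (hq : q ≠ 0) : Submodule.span F (Set.range (monomial q)) = ⊤ := by
  have hclosure :
      ∀ u ∈ Submonoid.closure {x q, y q}, ∃ (c : F) (m : ℕ × ℕ), u = c • monomial q m := by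
    intro u hu
    induction hu using Submonoid.closure_induction_right with
    | one => exact ⟨1, (0, 0), by simp [monomial]⟩
    | mul_right u _ g hg ih =>
      obtain ⟨c, m, rfl⟩ := ih
      rcases hg with rfl | rfl
      · exact ⟨c * (q ^ m.2)⁻¹, _, by rw [smul_mul_assoc, monomial_mul_x hq, smul_smul]⟩
      · exact ⟨c, _, by rw [smul_mul_assoc, monomial_mul_y]⟩
  refine eq_top_iff.mpr ?_
  calc ⊤ = Subalgebra.toSubmodule (Algebra.adjoin F {x q, y q}) := by rw [adjoin_x_y]; rfl
    _ = Submodule.span F (Submonoid.closure {x q, y q}) := Algebra.adjoin_eq_span _ _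
    _ ≤ Submodule.span F (Set.range (monomial q)) := by
      refine Submodule.span_le.mpr fun u hu => ?_
      obtain ⟨c, m, rfl⟩ := hclosure u hu
      exact Submodule.smul_mem _ c (Submodule.subset_span ⟨m, rfl⟩)

variable (q) in
def xAction : Module.End F ((ℕ × ℕ) →₀ F) :=
  Finsupp.lsum F fun m => q ^ m.2 • Finsupp.lsingle (m.1 + 1, m.2)

variable (F) in
def yAction : Module.End F ((ℕ × ℕ) →₀ F) :=
  Finsupp.lsum F fun m => Finsupp.lsingle (m.1, m.2 + 1)

theorem xAction_single (m : ℕ × ℕ) (c : F) :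
    xAction q (Finsupp.single m c) = Finsupp.single (m.1 + 1, m.2) (q ^ m.2 * c) := by
  simp [xAction, Finsupp.smul_single]

theorem yAction_single (m : ℕ × ℕ) (c : F) :
    yAction F (Finsupp.single m c) = Finsupp.single (m.1, m.2 + 1) c := by
  simp [yAction]

variable (q) in
def representation : QuantumPlane q →ₐ[F] Module.End F ((ℕ × ℕ) →₀ F) :=
  RingQuot.liftAlgHom F ⟨FreeAlgebra.lift F ![xAction q, yAction F], by
    rintro _ _ ⟨⟩
    refine Finsupp.lhom_ext fun m c => ?_
    simp only [map_mul, map_smul, FreeAlgebra.lift_ι_apply, Matrix.cons_val_zero,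
      Matrix.cons_val_one, Module.End.mul_apply, LinearMap.smul_apply, xAction_single,
      yAction_single, Finsupp.smul_single, smul_eq_mul, pow_succ]
    ring_nf⟩

theorem xAction_pow_single (n : ℕ) (m : ℕ × ℕ) (c : F) :
    (xAction q ^ n) (Finsupp.single m c) = Finsupp.single (m.1 + n, m.2) (q ^ (n * m.2) * c) := by
  induction n with
  | zero => simp
  | succ n ih =>
    rw [pow_succ', Module.End.mul_apply, ih, xAction_single, ← mul_assoc, ← pow_add]
    congr 2
    ring

theorem yAction_pow_single (n : ℕ) (m : ℕ × ℕ) (c : F) :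
    (yAction F ^ n) (Finsupp.single m c) = Finsupp.single (m.1, m.2 + n) c := by
  induction n with
  | zero => simp
  | succ n ih => rw [pow_succ', Module.End.mul_apply, ih, yAction_single, add_assoc]

theorem representation_monomial (m : ℕ × ℕ) :
    representation q (monomial q m) (Finsupp.single 0 1) =
      Finsupp.single m (q ^ (m.1 * m.2)) := by
  have hx : representation q (x q) = xAction q := by simp [representation, x]
  have hy : representation q (y q) = yAction F := by simp [representation, y]
  rw [monomial, map_mul, map_pow, map_pow, hx, hy, Module.End.mul_apply, yAction_pow_single,
    xAction_pow_single]
  simp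

theorem linearIndependent_monomial (hq : q ≠ 0) : LinearIndependent F (monomial q) := by
  refine LinearIndependent.of_comp
    (LinearMap.applyₗ (Finsupp.single 0 1) ∘ₗ (representation q).toLinearMap) ?_
  have hcomp : (LinearMap.applyₗ (Finsupp.single 0 1) ∘ₗ (representation q).toLinearMap) ∘
      monomial q = fun m => Finsupp.single m (q ^ (m.1 * m.2)) := funext representation_monomial
  rw [hcomp]
  exact Finsupp.linearIndependent_single_of_ne_zero fun m => pow_ne_zero _ hq

def basisMonomial (hq : q ≠ 0) : Module.Basis (ℕ × ℕ) F (QuantumPlane q) :=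
  Module.Basis.mk (linearIndependent_monomial hq) (span_range_monomial hq).ge

@[simp]
theorem coe_basisMonomial (hq : q ≠ 0) : ⇑(basisMonomial hq) = monomial q :=
  Module.Basis.coe_mk _ _

theorem mem_center_of_commute {z : QuantumPlane q} (hx : Commute z (x q))
    (hy : Commute z (y q)) :
    z ∈ Subalgebra.center F (QuantumPlane q) := by
  refine Subalgebra.mem_center_iff.mpr fun u => ?_
  have hu : u ∈ Algebra.adjoin F {x q, y q} := by simp [adjoin_x_y]
  refine (Algebra.commute_of_mem_adjoin_of_forall_mem_commute hu ?_).symm.eq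
  rintro g (rfl | rfl)
  exacts [hx, hy]

theorem x_pow_mem_center {n : ℕ} (h : q ^ n = 1) :
    x q ^ n ∈ Subalgebra.center F (QuantumPlane q) :=
  mem_center_of_commute ((Commute.refl _).pow_left n) (by
    rw [Commute, SemiconjBy, x_pow_mul_y, h, one_smul])

theorem y_pow_mem_center {n : ℕ} (h : q ^ n = 1) :
    y q ^ n ∈ Subalgebra.center F (QuantumPlane q) :=
  mem_center_of_commute (by
    rw [Commute, SemiconjBy, x_mul_y_pow, h, one_smul]) ((Commute.refl _).pow_left n)

theorem basisMonomial_repr_x_mul (hq : q ≠ 0) (u : QuantumPlane q) (m : ℕ × ℕ) :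
    (basisMonomial hq).repr (x q * u) (m + (1, 0)) = (basisMonomial hq).repr u m := by
  simpa using (basisMonomial hq).repr_map_apply_of_map_eq_smul (basisMonomial hq)
    (f := LinearMap.mulLeft F (x q)) (φ := 1) (add_left_injective ((1, 0) : ℕ × ℕ))
    (fun m => by simp [x_mul_monomial]) u m

theorem basisMonomial_repr_mul_x (hq : q ≠ 0) (u : QuantumPlane q) (m : ℕ × ℕ) :
    (basisMonomial hq).repr (u * x q) (m + (1, 0)) =
      (q ^ m.2)⁻¹ * (basisMonomial hq).repr u m :=
  (basisMonomial hq).repr_map_apply_of_map_eq_smul (basisMonomial hq)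
    (f := LinearMap.mulRight F (x q)) (φ := fun m => (q ^ m.2)⁻¹)
    (add_left_injective ((1, 0) : ℕ × ℕ))
    (fun m => by simp [monomial_mul_x hq]) u m

theorem basisMonomial_repr_mul_y (hq : q ≠ 0) (u : QuantumPlane q) (m : ℕ × ℕ) :
    (basisMonomial hq).repr (u * y q) (m + (0, 1)) = (basisMonomial hq).repr u m := by
  simpa using (basisMonomial hq).repr_map_apply_of_map_eq_smul (basisMonomial hq)
    (f := LinearMap.mulRight F (y q)) (φ := 1) (add_left_injective ((0, 1) : ℕ × ℕ))
    (fun m => by simp [monomial_mul_y]) u m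

theorem basisMonomial_repr_y_mul (hq : q ≠ 0) (u : QuantumPlane q) (m : ℕ × ℕ) :
    (basisMonomial hq).repr (y q * u) (m + (0, 1)) =
      (q ^ m.1)⁻¹ * (basisMonomial hq).repr u m :=
  (basisMonomial hq).repr_map_apply_of_map_eq_smul (basisMonomial hq)
    (f := LinearMap.mulLeft F (y q)) (φ := fun m => (q ^ m.1)⁻¹)
    (add_left_injective ((0, 1) : ℕ × ℕ))
    (fun m => by simp [y_mul_monomial hq]) u m

theorem pow_eq_one_of_mem_center (hq : q ≠ 0) {u : QuantumPlane q}
    (hu : u ∈ Subalgebra.center F (QuantumPlane q)) {m : ℕ × ℕ}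
    (hm : (basisMonomial hq).repr u m ≠ 0) : q ^ m.1 = 1 ∧ q ^ m.2 = 1 := by
  have hux := Subalgebra.mem_center_iff.mp hu (x q)
  have huy := Subalgebra.mem_center_iff.mp hu (y q)
  have hy_coeff := basisMonomial_repr_y_mul hq u m
  have hx_coeff := basisMonomial_repr_mul_x hq u m
  rw [huy, basisMonomial_repr_mul_y] at hy_coeff
  rw [← hux, basisMonomial_repr_x_mul] at hx_coeff
  exact ⟨inv_eq_one.mp ((mul_eq_right₀ hm).mp hy_coeff.symm),
    inv_eq_one.mp ((mul_eq_right₀ hm).mp hx_coeff.symm)⟩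

theorem center_eq_adjoin {ℓ : ℕ} (hq : IsPrimitiveRoot q ℓ) (hℓ : ℓ ≠ 0) :
    Subalgebra.center F (QuantumPlane q) = Algebra.adjoin F {x q ^ ℓ, y q ^ ℓ} := by
  have hq0 : q ≠ 0 := hq.ne_zero hℓ
  refine le_antisymm (fun u hu => ?_)
    (Algebra.adjoin_le (Set.pair_subset (x_pow_mem_center hq.pow_eq_one)
      (y_pow_mem_center hq.pow_eq_one)))
  suffices Submodule.span F ((basisMonomial hq0) '' ((basisMonomial hq0).repr u).support) ≤
      Subalgebra.toSubmodule (Algebra.adjoin F {x q ^ ℓ, y q ^ ℓ}) from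
    this ((basisMonomial hq0).mem_span_repr_support u)
  refine Submodule.span_le.mpr ?_
  rintro _ ⟨m, hm, rfl⟩
  obtain ⟨h1, h2⟩ := pow_eq_one_of_mem_center hq0 hu (Finsupp.mem_support_iff.mp hm)
  obtain ⟨a, ha⟩ := (hq.pow_eq_one_iff_dvd m.1).mp h1
  obtain ⟨b, hb⟩ := (hq.pow_eq_one_iff_dvd m.2).mp h2
  rw [coe_basisMonomial, monomial, ha, hb, pow_mul, pow_mul]
  show _ ∈ Algebra.adjoin F _
  exact mul_mem (pow_mem (Algebra.subset_adjoin (by simp)) a)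
    (pow_mem (Algebra.subset_adjoin (by simp)) b)

def centralGenerators {ℓ : ℕ} (h : q ^ ℓ = 1) :
    Fin 2 → Subalgebra.center F (QuantumPlane q) :=
  ![⟨x q ^ ℓ, x_pow_mem_center h⟩, ⟨y q ^ ℓ, y_pow_mem_center h⟩]

theorem adjoin_range_centralGenerators {ℓ : ℕ} (hq : IsPrimitiveRoot q ℓ) (hℓ : ℓ ≠ 0) :
    Algebra.adjoin F (Set.range (centralGenerators hq.pow_eq_one)) = ⊤ := by
  refine Subalgebra.map_injective (f := (Subalgebra.center F (QuantumPlane q)).val)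
    Subtype.val_injective ?_
  rw [← Algebra.adjoin_image, Algebra.map_top, Subalgebra.range_val, centralGenerators,
    Matrix.range_cons_cons_empty, Set.image_pair]
  exact (center_eq_adjoin hq hℓ).symm

theorem algebraicIndependent_centralGenerators {ℓ : ℕ} (hq : IsPrimitiveRoot q ℓ)
    (hℓ : ℓ ≠ 0) :
    AlgebraicIndependent F (centralGenerators hq.pow_eq_one) := by
  have hscale : Function.Injective fun s : Fin 2 →₀ ℕ => (ℓ * s 0, ℓ * s 1) := fun s t h =>
    Finsupp.ext <| Fin.forall_fin_two.mpr
      ⟨Nat.eq_of_mul_eq_mul_left (Nat.pos_of_ne_zero hℓ) (congrArg Prod.fst h),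
        Nat.eq_of_mul_eq_mul_left (Nat.pos_of_ne_zero hℓ) (congrArg Prod.snd h)⟩
  have hcomp : ((Subalgebra.center F (QuantumPlane q)).val.toLinearMap ∘ₗ
      (MvPolynomial.aeval (centralGenerators hq.pow_eq_one)).toLinearMap) ∘
      MvPolynomial.basisMonomials (Fin 2) F = monomial q ∘ fun s => (ℓ * s 0, ℓ * s 1) := by
    funext s
    simp [MvPolynomial.aeval_monomial, Finsupp.prod_fintype, centralGenerators, monomial,
      pow_mul]
  have hli := (linearIndependent_monomial (hq.ne_zero hℓ)).comp _ hscale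
  rw [← hcomp] at hli
  rw [algebraicIndependent_iff_injective_aeval]
  exact Function.Injective.of_comp (f := (Subalgebra.center F (QuantumPlane q)).val)
    (LinearMap.injective_of_linearIndependent (MvPolynomial.basisMonomials (Fin 2) F).span_eq hli)

def centerEquivMvPolynomial {ℓ : ℕ} (hq : IsPrimitiveRoot q ℓ) (hℓ : ℓ ≠ 0) :
    Subalgebra.center F (QuantumPlane q) ≃ₐ[F] MvPolynomial (Fin 2) F :=
  ((algebraicIndependent_centralGenerators hq hℓ).aevalEquiv.trans
    ((Subalgebra.equivOfEq _ _ (adjoin_range_centralGenerators hq hℓ)).trans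
      Subalgebra.topEquiv)).symm

end QuantumPlane

end

/-- At a primitive ℓ-th root of unity, the center of the quantum plane
`A_q = F⟨x,y⟩/(xy - q yx)` is the subalgebra generated by `x^ℓ` and `y^ℓ`:
these elements are central, commute, and generate a polynomial ring in two variables. -/
theorem quantum_plane_center (F : Type) [Field F] (q : F) (ℓ : ℕ)
    (hq : IsPrimitiveRoot q ℓ) (hℓ : 1 ≤ ℓ) :
    let x := RingQuot.mkAlgHom F (QPlaneRel F q) (FreeAlgebra.ι F 0)
    let y := RingQuot.mkAlgHom F (QPlaneRel F q) (FreeAlgebra.ι F 1)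
    x ^ ℓ ∈ Subalgebra.center F (RingQuot (QPlaneRel F q)) ∧
    y ^ ℓ ∈ Subalgebra.center F (RingQuot (QPlaneRel F q)) ∧
    Commute (x ^ ℓ) (y ^ ℓ) ∧
    Subalgebra.center F (RingQuot (QPlaneRel F q))
      = Algebra.adjoin F ({x ^ ℓ, y ^ ℓ} : Set (RingQuot (QPlaneRel F q))) ∧
    Nonempty ((Subalgebra.center F (RingQuot (QPlaneRel F q))) ≃ₐ[F] MvPolynomial (Fin 2) F) := by
  intro x y
  have hℓ0 : ℓ ≠ 0 := Nat.one_le_iff_ne_zero.mp hℓ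
  have hx : x ^ ℓ ∈ Subalgebra.center F _ := QuantumPlane.x_pow_mem_center hq.pow_eq_one
  have hy : y ^ ℓ ∈ Subalgebra.center F _ := QuantumPlane.y_pow_mem_center hq.pow_eq_one
  exact ⟨hx, hy, (Subalgebra.mem_center_iff.mp hx _).symm,
    QuantumPlane.center_eq_adjoin hq hℓ0, ⟨QuantumPlane.centerEquivMvPolynomial hq hℓ0⟩⟩
end

section
/- (Hayashi's lemma, abstract form) Let R be a commutative ring, π ∈ R, and A an R-algebra such that the element π is a non-zero-divisor on A. Suppose z₁, z₂ ∈ A are such that [zᵢ, a] ∈ πA for all a ∈ A (i = 1, 2). Then for every a ∈ A, [a, [z₁, z₂]] ∈ π²A. -/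
theorem LieModule.exists_lie_lie_eq_sq_smul {R L M : Type*} [CommRing R] [LieRing L]
    [LieAlgebra R L] [AddCommGroup M] [Module R M] [LieRingModule L M] [LieModule R L M]
    (π : R) {z₁ z₂ : L} (h₁ : ∀ m : M, ∃ n : M, ⁅z₁, m⁆ = π • n)
    (h₂ : ∀ m : M, ∃ n : M, ⁅z₂, m⁆ = π • n) (m : M) :
    ∃ n : M, ⁅⁅z₁, z₂⁆, m⁆ = (π ^ 2) • n := by
  obtain ⟨b₁, hb₁⟩ := h₁ m
  obtain ⟨b₂, hb₂⟩ := h₂ m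
  obtain ⟨c₁, hc₁⟩ := h₁ b₂
  obtain ⟨c₂, hc₂⟩ := h₂ b₁
  refine ⟨c₁ - c₂, ?_⟩
  rw [lie_lie, hb₁, hb₂, lie_smul, lie_smul, hc₁, hc₂, smul_sub, pow_two, mul_smul, mul_smul]

theorem hayashi_lemma_general {R A : Type*} [CommRing R] [Ring A] [Algebra R A] (π : R)
    (z₁ z₂ : A)
    (h₁ : ∀ a : A, ∃ b : A, z₁ * a - a * z₁ = π • b)
    (h₂ : ∀ a : A, ∃ b : A, z₂ * a - a * z₂ = π • b)
    (a : A) :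
    ∃ c : A, a * (z₁ * z₂ - z₂ * z₁) - (z₁ * z₂ - z₂ * z₁) * a = (π ^ 2) • c := by
  -- not a global instance; under it `h₁` and `h₂` are definitionally statements about `⁅zᵢ, a⁆`
  let := LieRing.ofAssociativeRing (A := A)
  obtain ⟨c, hc⟩ := LieModule.exists_lie_lie_eq_sq_smul (z₁ := z₁) (z₂ := z₂) π h₁ h₂ a
  refine ⟨-c, ?_⟩
  rw [smul_neg, ← hc, LieRing.of_associative_ring_bracket, LieRing.of_associative_ring_bracket,
    neg_sub]

/-- Hayashi's lemma, abstract form: if `π` is a non-zero-divisor on `A` and the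
commutators of `z₁, z₂` with everything lie in `πA`, then commutators with
`[z₁,z₂]` lie in `π²A`. -/
theorem hayashi_lemma {R A : Type*} [CommRing R] [Ring A] [Algebra R A] (π : R)
    (hreg : ∀ a : A, π • a = 0 → a = 0)
    (z₁ z₂ : A)
    (h₁ : ∀ a : A, ∃ b : A, z₁ * a - a * z₁ = π • b)
    (h₂ : ∀ a : A, ∃ b : A, z₂ * a - a * z₂ = π • b)
    (a : A) :
    ∃ c : A, a * (z₁ * z₂ - z₂ * z₁) - (z₁ * z₂ - z₂ * z₁) * a = (π ^ 2) • c :=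
  hayashi_lemma_general π z₁ z₂ h₁ h₂ a
end

section
/- Let F be a field, q ∈ F with q^ℓ = 1 for an integer ℓ ≥ 1, and let S_q = F⟨x₁,…,x_N⟩/(x_m x_n − q^{−1} x_n x_m for m > n) be the q-symmetric algebra. Then the elements x₁^ℓ, …, x_N^ℓ pairwise commute and lie in the center of S_q, and the subalgebra they generate is isomorphic to a (commutative) polynomial ring in N variables. -/
/-!
In `S_q` every generator `q`-commutes with every other, so `x_i^ℓ` commutes with all generators
once `q^ℓ = 1`, hence is central. For the polynomial ring, `S_q` acts on `F[X₁,…,X_N]` by letting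
`x_i` multiply by `X_i` after rescaling each `X_j` with `j < i` by `q⁻¹`; then `x_i^ℓ` acts as
multiplication by `X_i^ℓ`, so a polynomial `p` in the `x_i^ℓ` acts on `1` as
`p(X₁^ℓ,…,X_N^ℓ)`, which determines `p`.
-/

/-- The defining relations `x_m x_n = q⁻¹ • (x_n x_m)` (for `m > n`) of the
q-symmetric algebra. -/
inductive QSymRel (F : Type) [Field F] (q : F) (N : ℕ) :
    FreeAlgebra F (Fin N) → FreeAlgebra F (Fin N) → Prop
  | rel {m n : Fin N} (h : n < m) :
      QSymRel F q N (FreeAlgebra.ι F m * FreeAlgebra.ι F n)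
        (q⁻¹ • (FreeAlgebra.ι F n * FreeAlgebra.ι F m))

section QCommute

variable {R A : Type*} [CommSemiring R] [Semiring A] [Algebra R A] {a b : A} {r : R}

theorem pow_mul_eq_smul_mul_pow_of_mul_eq_smul (h : a * b = r • (b * a)) (k : ℕ) :
    a ^ k * b = r ^ k • (b * a ^ k) := by
  induction k with
  | zero => simp
  | succ k ih =>
    rw [pow_succ, mul_assoc, h, mul_smul_comm, ← mul_assoc, ih, smul_mul_assoc, smul_smul,
      mul_assoc, ← pow_succ, ← pow_succ']

theorem mul_pow_eq_smul_pow_mul_of_mul_eq_smul (h : a * b = r • (b * a)) (k : ℕ) :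
    a * b ^ k = r ^ k • (b ^ k * a) := by
  induction k with
  | zero => simp
  | succ k ih =>
    rw [pow_succ', ← mul_assoc, h, smul_mul_assoc, mul_assoc, ih, mul_smul_comm, smul_smul,
      ← mul_assoc, ← pow_succ', pow_succ]

theorem commute_pow_left_of_mul_eq_smul {k : ℕ} (h : a * b = r • (b * a)) (hr : r ^ k = 1) :
    Commute (a ^ k) b := by
  rw [Commute, SemiconjBy, pow_mul_eq_smul_mul_pow_of_mul_eq_smul h, hr, one_smul]

theorem commute_pow_right_of_mul_eq_smul {k : ℕ} (h : a * b = r • (b * a)) (hr : r ^ k = 1) :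
    Commute a (b ^ k) := by
  rw [Commute, SemiconjBy, mul_pow_eq_smul_pow_mul_of_mul_eq_smul h, hr, one_smul]

end QCommute

namespace MvPolynomial

variable {R σ : Type*} [CommSemiring R]

noncomputable def scaleVars (c : σ → R) : MvPolynomial σ R →ₐ[R] MvPolynomial σ R :=
  aeval fun j => c j • X j

@[simp]
theorem scaleVars_X (c : σ → R) (j : σ) : scaleVars c (X j) = c j • X j := by
  simp [scaleVars]

theorem scaleVars_comp_scaleVars (c d : σ → R) :
    (scaleVars c).comp (scaleVars d) = scaleVars (c * d) := by
  ext j : 1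
  simp [smul_smul, mul_comm]

theorem scaleVars_one : scaleVars (1 : σ → R) = AlgHom.id R _ := by
  ext j : 1
  simp

theorem scaleVars_scaleVars (c d : σ → R) (f : MvPolynomial σ R) :
    scaleVars c (scaleVars d f) = scaleVars (c * d) f := by
  rw [← scaleVars_comp_scaleVars, AlgHom.comp_apply]

noncomputable def twistedMulX (c : σ → R) (i : σ) : Module.End R (MvPolynomial σ R) :=
  Algebra.lmul R _ (X i) * (scaleVars c).toLinearMap

theorem twistedMulX_apply (c : σ → R) (i : σ) (f : MvPolynomial σ R) :
    twistedMulX c i f = X i * scaleVars c f := rfl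

theorem smul_twistedMulX_mul_twistedMulX (c d : σ → R) (m n : σ) :
    d m • (twistedMulX c m * twistedMulX d n) = c n • (twistedMulX d n * twistedMulX c m) := by
  refine LinearMap.ext fun f => ?_
  simp only [LinearMap.smul_apply, Module.End.mul_apply, twistedMulX_apply, map_mul,
    scaleVars_X, scaleVars_scaleVars, mul_comm c d, smul_mul_assoc, mul_smul_comm, smul_smul]
  rw [mul_comm (d m), mul_left_comm (X m)]

theorem twistedMulX_pow {c : σ → R} {i : σ} (hc : c i = 1) (k : ℕ) :
    twistedMulX c i ^ k = Algebra.lmul R _ (X i ^ k) * (scaleVars (c ^ k)).toLinearMap := by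
  induction k with
  | zero => rw [pow_zero, pow_zero, map_one, pow_zero, scaleVars_one]; rfl
  | succ k ih =>
    refine LinearMap.ext fun f => ?_
    simp only [pow_succ, ih, Module.End.mul_apply, twistedMulX_apply, AlgHom.toLinearMap_apply,
      Algebra.coe_lmul_eq_mul, LinearMap.mul_apply', map_mul, scaleVars_X, Pi.pow_apply, hc,
      one_pow, one_smul, scaleVars_scaleVars]

theorem twistedMulX_pow_of_pow_eq_one {c : σ → R} {i : σ} {k : ℕ} (hc : c i = 1)
    (hk : c ^ k = 1) : twistedMulX c i ^ k = Algebra.lmul R _ (X i ^ k) := by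
  rw [twistedMulX_pow hc, hk, scaleVars_one]
  rfl

theorem range_eq_adjoin_range_X {A : Type*} [Semiring A] [Algebra R A]
    (φ : MvPolynomial σ R →ₐ[R] A) : φ.range = Algebra.adjoin R (Set.range (φ ∘ X)) := by
  rw [← Algebra.map_top, ← adjoin_range_X, AlgHom.map_adjoin, ← Set.range_comp]

end MvPolynomial

open MvPolynomial

namespace QSymRel

variable {F : Type} [Field F] {q : F} {N : ℕ}

noncomputable def x : Fin N → RingQuot (QSymRel F q N) :=
  RingQuot.mkAlgHom F (QSymRel F q N) ∘ FreeAlgebra.ι F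

theorem x_mul_x {m n : Fin N} (h : n < m) :
    (x m * x n : RingQuot (QSymRel F q N)) = q⁻¹ • (x n * x m) := by
  simpa only [x, Function.comp_apply, map_mul, map_smul] using
    RingQuot.mkAlgHom_rel F (QSymRel.rel (q := q) h)

theorem adjoin_range_x : Algebra.adjoin F (Set.range (x (q := q) (N := N))) = ⊤ := by
  rw [x, Set.range_comp, ← AlgHom.map_adjoin, FreeAlgebra.adjoin_range_ι, Algebra.map_top,
    AlgHom.range_eq_top]
  exact RingQuot.mkAlgHom_surjective F _

theorem commute_x_pow_x {ℓ : ℕ} (hq : q ^ ℓ = 1) (i j : Fin N) :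
    Commute (x i ^ ℓ : RingQuot (QSymRel F q N)) (x j) := by
  have hq' : q⁻¹ ^ ℓ = 1 := by rw [inv_pow, hq, inv_one]
  rcases lt_trichotomy i j with hij | rfl | hij
  · exact (commute_pow_right_of_mul_eq_smul (x_mul_x hij) hq').symm
  · exact (Commute.refl _).pow_left ℓ
  · exact commute_pow_left_of_mul_eq_smul (x_mul_x hij) hq'

theorem x_pow_mem_center {ℓ : ℕ} (hq : q ^ ℓ = 1) (i : Fin N) :
    (x i ^ ℓ : RingQuot (QSymRel F q N)) ∈ Subalgebra.center F _ := by
  refine Subalgebra.mem_center_iff.mpr fun b => Eq.symm <|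
    Algebra.commute_of_mem_adjoin_of_forall_mem_commute (R := F) (s := Set.range x) ?_ ?_
  · rw [adjoin_range_x]
    trivial
  · rintro _ ⟨j, rfl⟩
    exact commute_x_pow_x hq i j

/-- The rescaling that `x_i` applies before multiplying by `X_i`. -/
def twist (q : F) (i j : Fin N) : F := if j < i then q⁻¹ else 1

theorem twist_pow_eq_one {ℓ : ℕ} (hq : q ^ ℓ = 1) (i : Fin N) : twist q i ^ ℓ = 1 := by
  funext j
  simp only [twist, Pi.pow_apply, Pi.one_apply]
  split_ifs <;> simp [inv_pow, hq]

noncomputable def rep : RingQuot (QSymRel F q N) →ₐ[F] Module.End F (MvPolynomial (Fin N) F) :=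
  RingQuot.liftAlgHom F ⟨FreeAlgebra.lift F fun i => twistedMulX (twist q i) i, by
    rintro _ _ (@⟨m, n, h⟩)
    have := smul_twistedMulX_mul_twistedMulX (twist q m) (twist q n) m n
    simpa only [map_mul, map_smul, FreeAlgebra.lift_ι_apply, twist, if_pos h,
      if_neg (not_lt.mpr h.le), one_smul] using this⟩

theorem rep_x_pow {ℓ : ℕ} (hq : q ^ ℓ = 1) (i : Fin N) :
    rep (x i ^ ℓ : RingQuot (QSymRel F q N)) = Algebra.lmul F _ (X i ^ ℓ) := by
  rw [map_pow, rep, x, Function.comp_apply, RingQuot.liftAlgHom_mkAlgHom_apply,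
    FreeAlgebra.lift_ι_apply]
  exact twistedMulX_pow_of_pow_eq_one (by simp [twist]) (twist_pow_eq_one hq i)

theorem nonempty_adjoin_x_pow_algEquiv {ℓ : ℕ} (hq : q ^ ℓ = 1) (hℓ : 0 < ℓ) :
    Nonempty (Algebra.adjoin F (Set.range fun i => (x i ^ ℓ : RingQuot (QSymRel F q N)))
      ≃ₐ[F] MvPolynomial (Fin N) F) := by
  -- `aeval` needs a commutative target, hence the detour through the centre.
  let φ : MvPolynomial (Fin N) F →ₐ[F] RingQuot (QSymRel F q N) :=
    (Subalgebra.center F _).val.comp (aeval fun i => ⟨x i ^ ℓ, x_pow_mem_center hq i⟩)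
  have hφ : rep.comp φ = (Algebra.lmul F _).comp (expand ℓ) := by
    ext i : 1
    simpa [φ] using rep_x_pow hq i
  have hinj : Function.Injective φ := by
    refine Function.Injective.of_comp (f := rep) ?_
    rw [← AlgHom.coe_comp, hφ, AlgHom.coe_comp]
    exact Algebra.lmul_injective.comp (expand_injective hℓ)
  have hrange : φ.range = Algebra.adjoin F (Set.range fun i => x i ^ ℓ) := by
    rw [range_eq_adjoin_range_X]
    congr 2
    funext i
    simp [φ]
  exact ⟨((AlgEquiv.ofInjective φ hinj).trans (Subalgebra.equivOfEq _ _ hrange)).symm⟩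

end QSymRel

/-- If `q^ℓ = 1` then the ℓ-th powers of the generators of the q-symmetric algebra
are central, pairwise commute, and generate a polynomial ring in `N` variables. -/
theorem qsym_frobenius_center (F : Type) [Field F] (q : F) (ℓ N : ℕ)
    (hq : q ^ ℓ = 1) (hℓ : 1 ≤ ℓ) :
    let x : Fin N → RingQuot (QSymRel F q N) :=
      fun i => RingQuot.mkAlgHom F (QSymRel F q N) (FreeAlgebra.ι F i)
    (∀ i, x i ^ ℓ ∈ Subalgebra.center F (RingQuot (QSymRel F q N))) ∧
    (∀ i j, Commute (x i ^ ℓ) (x j ^ ℓ)) ∧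
    Nonempty ((Algebra.adjoin F (Set.range fun i => x i ^ ℓ)) ≃ₐ[F] MvPolynomial (Fin N) F) :=
  ⟨QSymRel.x_pow_mem_center hq, fun i j => (QSymRel.commute_x_pow_x hq i j).pow_right ℓ,
    QSymRel.nonempty_adjoin_x_pow_algEquiv hq hℓ⟩
end

section
/- Let R be a ring, q a central unit of R, and suppose x, ∂ ∈ R satisfy ∂x = q² x∂ + q. Define the R-module V = ⊕_{k=0}^{ℓ−1} F·v_k over a field F where q ∈ F is a primitive ℓ-th root of unity with ℓ > 1 odd, with actions x·v_k = v_{k+1} (indices k < ℓ−1), x·v_{ℓ−1} = 0, and ∂·v_k = q·(Σ_{j=0}^{k−1} q^{2j})·v_{k−1} (with ∂·v₀ = 0). Then these formulas define a module over the F-algebra F⟨x,∂⟩/(∂x − q²x∂ − q), and this module is simple (has no proper nonzero submodules). -/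
/-!
Put `c k = q (1 + q² + ⋯ + q^(2(k-1)))`, so that `x` raises `v_k` to `v_{k+1}` and `∂` lowers
`v_k` to `c k • v_{k-1}`. Then `x∂` and `∂x` are diagonal with entries `c k` and `c (k+1)`, and
the relation is the recursion `c (k+1) = q² c k + q` together with `c ℓ = 0` at the top vector;
the latter holds because, `ℓ` being odd, `q²` is again a primitive `ℓ`-th root of unity.
For the same reason `c k ≠ 0` for `0 < k < ℓ`, so `∂` lowers the top index of any nonzero vector
of an invariant subspace until only a multiple of `v_0` is left, and `x` then produces every `v_k`.
-/

open Finset Matrix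

/-- The defining relation `∂ x = q² • (x ∂) + q • 1` of the q-Weyl algebra, with
`x = ι 0` and `∂ = ι 1`. -/
inductive QWeylRel (F : Type) [Field F] (q : F) :
    FreeAlgebra F (Fin 2) → FreeAlgebra F (Fin 2) → Prop
  | rel : QWeylRel F q (FreeAlgebra.ι F 1 * FreeAlgebra.ι F 0)
      (q ^ 2 • (FreeAlgebra.ι F 0 * FreeAlgebra.ι F 1) + q • 1)

section Arith
variable {R : Type*} [CommRing R]

def qWeylCoeff (q : R) (k : ℕ) : R := q * ∑ t ∈ range k, q ^ (2 * t)

lemma qWeylCoeff_eq_mul_geom_sum (q : R) (k : ℕ) :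
    qWeylCoeff q k = q * ∑ t ∈ range k, (q ^ 2) ^ t := by
  simp only [qWeylCoeff, pow_mul]

@[simp] lemma qWeylCoeff_zero (q : R) : qWeylCoeff q 0 = 0 := by simp [qWeylCoeff]

lemma qWeylCoeff_succ (q : R) (k : ℕ) :
    qWeylCoeff q (k + 1) = q ^ 2 * qWeylCoeff q k + q := by
  rw [qWeylCoeff_eq_mul_geom_sum, qWeylCoeff_eq_mul_geom_sum, geom_sum_succ]
  ring

lemma IsPrimitiveRoot.geom_sum_ne_zero {ζ : R} {n k : ℕ} (hζ : IsPrimitiveRoot ζ n)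
    (hk : k ≠ 0) (hkn : k < n) : ∑ i ∈ range k, ζ ^ i ≠ 0 := by
  intro h
  have := geom_sum_mul ζ k
  rw [h, zero_mul, eq_comm, sub_eq_zero] at this
  exact hζ.pow_ne_one_of_pos_of_lt hk hkn this

variable [IsDomain R] {q : R} {ℓ : ℕ}

lemma IsPrimitiveRoot.qWeylCoeff_self (hq : IsPrimitiveRoot q ℓ) (hℓ : 1 < ℓ) (hodd : Odd ℓ) :
    qWeylCoeff q ℓ = 0 := by
  rw [qWeylCoeff_eq_mul_geom_sum,
    (hq.pow_of_coprime 2 (Nat.coprime_two_left.mpr hodd)).geom_sum_eq_zero hℓ, mul_zero]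

lemma IsPrimitiveRoot.qWeylCoeff_ne_zero (hq : IsPrimitiveRoot q ℓ) (hodd : Odd ℓ)
    {k : ℕ} (hk : k ≠ 0) (hkℓ : k < ℓ) : qWeylCoeff q k ≠ 0 := by
  rw [qWeylCoeff_eq_mul_geom_sum]
  exact mul_ne_zero (hq.ne_zero (by omega))
    ((hq.pow_of_coprime 2 (Nat.coprime_two_left.mpr hodd)).geom_sum_ne_zero hk hkℓ)

end Arith

section Lift
variable {F : Type} [Field F] {q : F} {A : Type*} [Semiring A] [Algebra F A]

def qWeylLift (a d : A) (h : d * a = q ^ 2 • (a * d) + q • 1) :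
    RingQuot (QWeylRel F q) →ₐ[F] A :=
  RingQuot.liftAlgHom F ⟨FreeAlgebra.lift F ![a, d], by rintro _ _ ⟨⟩; simpa using h⟩

variable (a d : A) (h : d * a = q ^ 2 • (a * d) + q • 1)

@[simp] lemma qWeylLift_x :
    qWeylLift a d h (RingQuot.mkAlgHom F (QWeylRel F q) (FreeAlgebra.ι F 0)) = a := by
  simp [qWeylLift]

@[simp] lemma qWeylLift_d :
    qWeylLift a d h (RingQuot.mkAlgHom F (QWeylRel F q) (FreeAlgebra.ι F 1)) = d := by
  simp [qWeylLift]

end Lift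

section Shift
variable {R : Type*} [CommRing R] {n : ℕ}

variable (R n) in
def raiseMatrix : Matrix (Fin n) (Fin n) R :=
  Matrix.of fun i j => if (i : ℕ) = j + 1 then 1 else 0

def lowerMatrix (c : ℕ → R) : Matrix (Fin n) (Fin n) R :=
  Matrix.of fun i j => if (j : ℕ) = i + 1 then c (i + 1) else 0

lemma raiseMatrix_mulVec_single {i j : Fin n} (h : (i : ℕ) = j + 1) :
    raiseMatrix R n *ᵥ Pi.single j 1 = Pi.single i 1 := by
  ext k
  simp [raiseMatrix, Pi.single_apply, Fin.ext_iff, h]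

lemma raiseMatrix_mulVec_single_last {j : Fin n} (h : (j : ℕ) + 1 = n) :
    raiseMatrix R n *ᵥ Pi.single j 1 = 0 := by
  rw [mulVec_single_one]
  ext k
  have := k.isLt
  simp only [col_apply, raiseMatrix, of_apply, Pi.zero_apply, ite_eq_right_iff]
  omega

lemma lowerMatrix_mulVec_single {c : ℕ → R} {i j : Fin n} (h : (j : ℕ) = i + 1) :
    lowerMatrix c *ᵥ Pi.single j 1 = c j • Pi.single i 1 := by
  rw [mulVec_single_one, ← Pi.single_smul, smul_eq_mul, mul_one]
  ext k
  simp only [col_apply, lowerMatrix, of_apply, h, Nat.add_right_cancel_iff, Fin.val_inj]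
  rcases eq_or_ne k i with rfl | hk
  · simp
  · simp [hk, hk.symm]

lemma lowerMatrix_mulVec_single_zero {c : ℕ → R} {j : Fin n} (h : (j : ℕ) = 0) :
    lowerMatrix c *ᵥ Pi.single j 1 = 0 := by
  ext k
  simp [lowerMatrix, h]

lemma lowerMatrix_mulVec_apply {c : ℕ → R} (w : Fin n → R) {i j : Fin n} (h : (j : ℕ) = i + 1) :
    (lowerMatrix c *ᵥ w) i = c j * w j := by
  refine (Fintype.sum_eq_single j fun k hk => ?_).trans ?_
  · simp only [ne_eq, Fin.ext_iff, lowerMatrix, of_apply, ite_mul, zero_mul,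
      ite_eq_right_iff] at hk ⊢
    omega
  · simp [lowerMatrix, h]

lemma lowerMatrix_mulVec_apply_last {c : ℕ → R} (w : Fin n → R) {i : Fin n}
    (h : (i : ℕ) + 1 = n) : (lowerMatrix c *ᵥ w) i = 0 := by
  refine Fintype.sum_eq_zero (fun k => lowerMatrix c i k * w k) fun k => ?_
  have := k.isLt
  simp only [lowerMatrix, of_apply, ite_mul, zero_mul, ite_eq_right_iff]
  omega

lemma raiseMatrix_mul_lowerMatrix {c : ℕ → R} (hc : c 0 = 0) :
    raiseMatrix R n * lowerMatrix c = diagonal fun j : Fin n => c j := by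
  refine ext_of_mulVec_single fun j => ?_
  rw [← mulVec_mulVec, diagonal_mulVec_single, mul_one]
  rcases Nat.eq_zero_or_eq_succ_pred j with h | h
  · rw [lowerMatrix_mulVec_single_zero h, mulVec_zero, h, hc, Pi.single_zero]
  · rw [lowerMatrix_mulVec_single (i := ⟨j - 1, by omega⟩) h, mulVec_smul,
      raiseMatrix_mulVec_single h, ← Pi.single_smul, smul_eq_mul, mul_one]

lemma lowerMatrix_mul_raiseMatrix {c : ℕ → R} (hc : c n = 0) :
    lowerMatrix c * raiseMatrix R n = diagonal fun j : Fin n => c (j + 1) := by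
  refine ext_of_mulVec_single fun j => ?_
  rw [← mulVec_mulVec, diagonal_mulVec_single, mul_one]
  by_cases h : (j : ℕ) + 1 < n
  · rw [raiseMatrix_mulVec_single (i := ⟨j + 1, h⟩) rfl, lowerMatrix_mulVec_single rfl,
      ← Pi.single_smul, smul_eq_mul, mul_one]
  · have h : (j : ℕ) + 1 = n := by omega
    rw [raiseMatrix_mulVec_single_last h, mulVec_zero, h, hc, Pi.single_zero]

lemma lowerMatrix_mul_raiseMatrix_eq {c : ℕ → R} (q : R) (hc0 : c 0 = 0) (hcn : c n = 0)
    (hc : ∀ k, c (k + 1) = q ^ 2 * c k + q) :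
    lowerMatrix c * raiseMatrix R n = q ^ 2 • (raiseMatrix R n * lowerMatrix c) + q • 1 := by
  rw [lowerMatrix_mul_raiseMatrix hcn, raiseMatrix_mul_lowerMatrix hc0, ← diagonal_smul,
    smul_one_eq_diagonal, diagonal_add]
  simp [hc]

end Shift

section Simple
variable {F : Type*} [Field F] {n : ℕ} {c : ℕ → F} {U : Submodule F (Fin n → F)}

lemma single_mem_of_raiseMatrix_invariant (hU : ∀ w ∈ U, raiseMatrix F n *ᵥ w ∈ U)
    (h0 : 0 < n) (he : Pi.single ⟨0, h0⟩ 1 ∈ U) (k : ℕ) (hk : k < n) :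
    Pi.single ⟨k, hk⟩ 1 ∈ U := by
  induction k with
  | zero => exact he
  | succ k ih =>
    rw [← raiseMatrix_mulVec_single (j := ⟨k, by omega⟩) rfl]
    exact hU _ (ih _)

lemma single_zero_mem_of_lowerMatrix_invariant (hc : ∀ k, k ≠ 0 → k < n → c k ≠ 0)
    (hU : ∀ w ∈ U, lowerMatrix c *ᵥ w ∈ U) (h0 : 0 < n) (k : ℕ) :
    ∀ w ∈ U, w ≠ 0 → (∀ i : Fin n, k < i → w i = 0) → Pi.single ⟨0, h0⟩ 1 ∈ U := by
  induction k with
  | zero =>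
    intro w hwU hw0 hsupp
    have hw : w = Pi.single ⟨0, h0⟩ (w ⟨0, h0⟩) := by
      ext i
      rcases eq_or_ne i ⟨0, h0⟩ with rfl | hi
      · simp
      · rw [Pi.single_eq_of_ne hi]
        exact hsupp i (Nat.pos_of_ne_zero (by simpa [Fin.ext_iff] using hi))
    have hw₀ : w ⟨0, h0⟩ ≠ 0 := fun h => hw0 (by rw [hw, h, Pi.single_zero])
    have hsingle : Pi.single (⟨0, h0⟩ : Fin n) (1 : F) =
        (w ⟨0, h0⟩)⁻¹ • Pi.single ⟨0, h0⟩ (w ⟨0, h0⟩) := by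
      rw [← Pi.single_smul, smul_eq_mul, inv_mul_cancel₀ hw₀]
    rw [hsingle, ← hw]
    exact U.smul_mem _ hwU
  | succ k ih =>
    intro w hwU hw0 hsupp
    by_cases htop : ∃ hk : k + 1 < n, w ⟨k + 1, hk⟩ ≠ 0
    · obtain ⟨hk, hwk⟩ := htop
      refine ih _ (hU w hwU) (fun h => ?_) fun i hi => ?_
      · have := congrFun h ⟨k, by omega⟩
        rw [lowerMatrix_mulVec_apply w (j := ⟨k + 1, hk⟩) rfl] at this
        exact mul_ne_zero (hc _ k.succ_ne_zero hk) hwk this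
      · by_cases hi' : (i : ℕ) + 1 < n
        · rw [lowerMatrix_mulVec_apply w (j := ⟨i + 1, hi'⟩) rfl,
            hsupp _ (show k + 1 < i + 1 by omega), mul_zero]
        · exact lowerMatrix_mulVec_apply_last w (by omega)
    · refine ih w hwU hw0 fun i hi => ?_
      rcases (show k + 1 < i ∨ k + 1 = i by omega) with hi | hi
      · exact hsupp i hi
      · rw [show i = ⟨k + 1, by omega⟩ from Fin.ext hi.symm]
        exact not_ne_iff.mp fun hne => htop ⟨_, hne⟩

theorem eq_bot_or_eq_top_of_raiseMatrix_lowerMatrix_invariant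
    (hc : ∀ k, k ≠ 0 → k < n → c k ≠ 0)
    (hUr : ∀ w ∈ U, raiseMatrix F n *ᵥ w ∈ U) (hUl : ∀ w ∈ U, lowerMatrix c *ᵥ w ∈ U) :
    U = ⊥ ∨ U = ⊤ := by
  refine or_iff_not_imp_left.mpr fun hU => ?_
  obtain ⟨w, hwU, hw0⟩ := (Submodule.ne_bot_iff U).mp hU
  obtain ⟨i₀, -⟩ := Function.ne_iff.mp hw0
  have h0 := single_zero_mem_of_lowerMatrix_invariant hc hUl i₀.pos n w hwU hw0
    fun i hi => absurd i.isLt (by omega)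
  rw [eq_top_iff, ← (Pi.basisFun F (Fin n)).span_eq, Submodule.span_le]
  rintro _ ⟨i, rfl⟩
  simpa using single_mem_of_raiseMatrix_invariant hUr i₀.pos h0 i i.isLt

end Simple

/-- For `q` a primitive ℓ-th root of unity (`ℓ > 1` odd), the formulas
`x·v_k = v_{k+1}` (with `x·v_{ℓ-1} = 0`) and `∂·v_k = q (Σ_{j<k} q^{2j}) v_{k-1}`
define a module over the q-Weyl algebra `F⟨x,∂⟩/(∂x − q²x∂ − q)`, and this module
is simple. -/
theorem qweyl_simple_module (F : Type) [Field F] (ℓ : ℕ) (q : F)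
    (hq : IsPrimitiveRoot q ℓ) (hℓ : 1 < ℓ) (hodd : Odd ℓ)
    (Xmat Pmat : Matrix (Fin ℓ) (Fin ℓ) F)
    (hX : ∀ i j, Xmat i j = if (i : ℕ) = (j : ℕ) + 1 then 1 else 0)
    (hP : ∀ i j, Pmat i j = if (j : ℕ) = (i : ℕ) + 1
        then q * ∑ t ∈ Finset.range ((i : ℕ) + 1), q ^ (2 * t) else 0) :
    (∃ ρ : RingQuot (QWeylRel F q) →ₐ[F] Module.End F (Fin ℓ → F),
        ρ (RingQuot.mkAlgHom F (QWeylRel F q) (FreeAlgebra.ι F 0)) = Matrix.toLin' Xmat ∧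
        ρ (RingQuot.mkAlgHom F (QWeylRel F q) (FreeAlgebra.ι F 1)) = Matrix.toLin' Pmat) ∧
    (∀ U : Submodule F (Fin ℓ → F),
        (∀ w ∈ U, Matrix.toLin' Xmat w ∈ U) → (∀ w ∈ U, Matrix.toLin' Pmat w ∈ U) →
        U = ⊥ ∨ U = ⊤) := by
  obtain rfl : Xmat = raiseMatrix F ℓ := Matrix.ext hX
  obtain rfl : Pmat = lowerMatrix (qWeylCoeff q) := Matrix.ext hP
  have hrel := lowerMatrix_mul_raiseMatrix_eq q (qWeylCoeff_zero q)
    (hq.qWeylCoeff_self hℓ hodd) (qWeylCoeff_succ q)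
  refine ⟨⟨Matrix.toLinAlgEquiv'.toAlgHom.comp (qWeylLift _ _ hrel),
    congrArg Matrix.toLinAlgEquiv' (qWeylLift_x _ _ hrel),
    congrArg Matrix.toLinAlgEquiv' (qWeylLift_d _ _ hrel)⟩, fun _ hUX hUP =>
    eq_bot_or_eq_top_of_raiseMatrix_lowerMatrix_invariant
      (fun _ hk hkℓ => hq.qWeylCoeff_ne_zero hodd hk hkℓ) hUX hUP⟩
end
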